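/- Let q > 0, q ≠ 1, n ≥ 1. Then the q-difference equation x² D_{q,x}² y + 2(x+1) D_{q,x} y − [n]_q([n−1]_q + 2) y = 0 admits a polynomial solution of degree n with a_0 = 1, a_1 = [n]_q([n−1]_q+2)/2, a_2 = (([n]_q([n−1]_q+2) − 1)² − 1)/(4[2]_q) (interpreting λ = [n]_q([n−1]_q+2)), and a_ν = a_2 ∏_{j=2}^{ν−1} ( (λ − [j]_q([j−1]_q+2)) / (2[j+1]_q) ) for ν ≥ 3. -/

import Mathlib

/-!
The operator `x² D_q² + 2(x+1) D_q` sends `x^p` to `λ_p x^p + 2[p]_q x^{p-1}` with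
`λ_p = [p]_q([p-1]_q + 2)`, so a power series `∑ a_p x^p` solves the equation with parameter `λ`
iff `2[p+1]_q a_{p+1} = (λ - λ_p) a_p` for all `p`. For `λ = λ_n` this recurrence produces the
factor `0` at `p = n`, so the solution is a polynomial; since `p ↦ λ_p` is strictly increasing
for `q > 0`, all factors before it are positive and `a_n ≠ 0`.
-/

open PowerSeries Finset

/-- The `q`-number `[j]_q = (1 - q^j)/(1 - q)`. -/
noncomputable def qnum (q : ℝ) (j : ℕ) : ℝ := (1 - q ^ j) / (1 - q)

/-- The Jackson `q`-derivative on formal power series, `D_q (x^p) = [p]_q x^{p-1}`. -/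
noncomputable def qDeriv (q : ℝ) (f : PowerSeries ℂ) : PowerSeries ℂ :=
  PowerSeries.mk fun p => ((qnum q (p + 1) : ℝ) : ℂ) * PowerSeries.coeff (R := ℂ) (p + 1) f

theorem qnum_zero (q : ℝ) : qnum q 0 = 0 := by simp [qnum]

section QNumber

variable {q : ℝ}

theorem qnum_succ (hq1 : q ≠ 1) (j : ℕ) : qnum q (j + 1) = qnum q j + q ^ j := by
  have : 1 - q ≠ 0 := sub_ne_zero.2 hq1.symm
  simp only [qnum]
  field_simp
  ring

theorem qnum_one (hq1 : q ≠ 1) : qnum q 1 = 1 := by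
  simp [qnum_succ hq1, qnum_zero]

theorem qnum_strictMono (hq : 0 < q) (hq1 : q ≠ 1) : StrictMono (qnum q) :=
  strictMono_nat_of_lt_succ fun j => by
    rw [qnum_succ hq1]
    exact lt_add_of_pos_right _ (pow_pos hq j)

theorem qnum_nonneg (hq : 0 < q) (hq1 : q ≠ 1) (j : ℕ) : 0 ≤ qnum q j :=
  qnum_zero q ▸ (qnum_strictMono hq hq1).monotone j.zero_le

theorem qnum_pos (hq : 0 < q) (hq1 : q ≠ 1) {j : ℕ} (hj : j ≠ 0) : 0 < qnum q j :=
  qnum_zero q ▸ qnum_strictMono hq hq1 (Nat.pos_of_ne_zero hj)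

end QNumber

noncomputable def qBesselEigenvalue (q : ℝ) (j : ℕ) : ℝ := qnum q j * (qnum q (j - 1) + 2)

theorem qBesselEigenvalue_strictMono {q : ℝ} (hq : 0 < q) (hq1 : q ≠ 1) :
    StrictMono (qBesselEigenvalue q) := by
  intro j k hjk
  have hnum := qnum_strictMono hq hq1 hjk
  have hpred := (qnum_strictMono hq hq1).monotone (Nat.sub_le_sub_right hjk.le 1)
  have := qnum_nonneg hq hq1 j
  have := qnum_nonneg hq hq1 (j - 1)
  unfold qBesselEigenvalue
  nlinarith

section Coefficients

variable (q lam : ℝ)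

noncomputable def qBesselRatio (j : ℕ) : ℝ :=
  (lam - qBesselEigenvalue q j) / (2 * qnum q (j + 1))

noncomputable def qBesselCoeff (p : ℕ) : ℝ := ∏ j ∈ range p, qBesselRatio q lam j

theorem qBesselCoeff_zero : qBesselCoeff q lam 0 = 1 :=
  prod_range_zero _

theorem qBesselCoeff_succ (p : ℕ) :
    qBesselCoeff q lam (p + 1) = qBesselCoeff q lam p * qBesselRatio q lam p :=
  prod_range_succ _ _

variable {q}

theorem qBesselCoeff_one (hq1 : q ≠ 1) : qBesselCoeff q lam 1 = lam / 2 := by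
  simp [qBesselCoeff, qBesselRatio, qBesselEigenvalue, qnum_zero, qnum_one hq1]

theorem qBesselCoeff_two (hq1 : q ≠ 1) :
    qBesselCoeff q lam 2 = ((lam - 1) ^ 2 - 1) / (4 * qnum q 2) := by
  rw [qBesselCoeff_succ, qBesselCoeff_one lam hq1, qBesselRatio, qBesselEigenvalue,
    qnum_one hq1, Nat.sub_self, qnum_zero]
  ring

theorem qBesselCoeff_eq_mul_prod {ν : ℕ} (hν : 2 ≤ ν) :
    qBesselCoeff q lam ν =
      qBesselCoeff q lam 2 * ∏ j ∈ Icc 2 (ν - 1), qBesselRatio q lam j := by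
  rw [qBesselCoeff, qBesselCoeff, ← prod_range_mul_prod_Ico _ hν, ← Ico_add_one_right_eq_Icc,
    Nat.sub_add_cancel (by omega)]

theorem two_mul_qnum_mul_qBesselCoeff_succ (hq : 0 < q) (hq1 : q ≠ 1) (p : ℕ) :
    2 * qnum q (p + 1) * qBesselCoeff q lam (p + 1) =
      (lam - qBesselEigenvalue q p) * qBesselCoeff q lam p := by
  have := (qnum_pos hq hq1 p.succ_ne_zero).ne'
  rw [qBesselCoeff_succ, qBesselRatio]
  field_simp

theorem qBesselCoeff_eigenvalue_eq_zero {n p : ℕ} (hp : n < p) :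
    qBesselCoeff q (qBesselEigenvalue q n) p = 0 :=
  prod_eq_zero (mem_range.2 hp) (by simp [qBesselRatio])

theorem qBesselCoeff_eigenvalue_pos (hq : 0 < q) (hq1 : q ≠ 1) {n p : ℕ} (hp : p ≤ n) :
    0 < qBesselCoeff q (qBesselEigenvalue q n) p := by
  refine prod_pos fun j hj => div_pos ?_ ?_
  · exact sub_pos.2 (qBesselEigenvalue_strictMono hq hq1 ((mem_range.1 hj).trans_le hp))
  · exact mul_pos two_pos (qnum_pos hq hq1 j.succ_ne_zero)

end Coefficients

section Operator

variable (q : ℝ) (f : PowerSeries ℂ)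

theorem coeff_qDeriv (p : ℕ) :
    coeff p (qDeriv q f) = (qnum q (p + 1) : ℂ) * coeff (p + 1) f := by
  simp [qDeriv]

theorem coeff_X_mul_qDeriv (p : ℕ) : coeff p (X * qDeriv q f) = (qnum q p : ℂ) * coeff p f := by
  rcases p with _ | p
  · simp [qnum_zero]
  · rw [coeff_succ_X_mul, coeff_qDeriv]

theorem coeff_X_sq_mul_qDeriv_qDeriv (p : ℕ) :
    coeff p (X ^ 2 * qDeriv q (qDeriv q f)) =
      (qnum q (p - 1) : ℂ) * (qnum q p : ℂ) * coeff p f := by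
  rw [coeff_X_pow_mul']
  rcases p with _ | _ | p
  · simp [qnum_zero]
  · simp [qnum_zero]
  · simp [coeff_qDeriv, mul_assoc]

theorem coeff_qBesselOperator (lam : ℂ) (p : ℕ) :
    coeff p (X ^ 2 * qDeriv q (qDeriv q f) + 2 * (X + 1) * qDeriv q f - C lam * f) =
      ((qBesselEigenvalue q p : ℂ) - lam) * coeff p f + 2 * qnum q (p + 1) * coeff (p + 1) f := by
  have h2 : (2 : PowerSeries ℂ) * (X + 1) * qDeriv q f =
      C 2 * (X * qDeriv q f) + C 2 * qDeriv q f := by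
    rw [map_ofNat]
    ring
  rw [h2, map_sub, map_add, map_add, coeff_C_mul, coeff_C_mul, coeff_C_mul,
    coeff_X_sq_mul_qDeriv_qDeriv, coeff_X_mul_qDeriv, coeff_qDeriv, qBesselEigenvalue]
  push_cast
  ring

end Operator

theorem qBesselOperator_qBesselCoeff_eq_zero {q : ℝ} (hq : 0 < q) (hq1 : q ≠ 1) (lam : ℝ) :
    let y : PowerSeries ℂ := mk fun p => (qBesselCoeff q lam p : ℂ)
    X ^ 2 * qDeriv q (qDeriv q y) + 2 * (X + 1) * qDeriv q y - C (lam : ℂ) * y = 0 := by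
  ext p
  rw [coeff_qBesselOperator, coeff_mk, coeff_mk, map_zero]
  have h := congrArg Complex.ofReal (two_mul_qnum_mul_qBesselCoeff_succ lam hq hq1 p)
  push_cast at h
  linear_combination h

theorem stmt16_general (q : ℝ) (hq : 0 < q) (hq1 : q ≠ 1) (n : ℕ) :
    ∃ a : ℕ → ℝ,
      a 0 = 1 ∧
      a 1 = qnum q n * (qnum q (n - 1) + 2) / 2 ∧
      a 2 = ((qnum q n * (qnum q (n - 1) + 2) - 1) ^ 2 - 1) / (4 * qnum q 2) ∧
      (∀ ν, 3 ≤ ν → a ν = a 2 *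
        ∏ j ∈ Finset.Icc 2 (ν - 1),
          ((qnum q n * (qnum q (n - 1) + 2) - qnum q j * (qnum q (j - 1) + 2)) /
            (2 * qnum q (j + 1)))) ∧
      (X : PowerSeries ℂ) ^ 2 * qDeriv q (qDeriv q (PowerSeries.mk fun p => ((a p : ℝ) : ℂ)))
        + 2 * ((X : PowerSeries ℂ) + 1) * qDeriv q (PowerSeries.mk fun p => ((a p : ℝ) : ℂ))
        - C (R := ℂ) ((qnum q n * (qnum q (n - 1) + 2) : ℝ) : ℂ) *
            (PowerSeries.mk fun p => ((a p : ℝ) : ℂ)) = 0 ∧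
      (∀ p, n < p → a p = 0) ∧ a n ≠ 0 :=
  ⟨qBesselCoeff q (qBesselEigenvalue q n),
    qBesselCoeff_zero q _,
    qBesselCoeff_one _ hq1,
    qBesselCoeff_two _ hq1,
    fun _ hν => qBesselCoeff_eq_mul_prod _ (by omega),
    qBesselOperator_qBesselCoeff_eq_zero hq hq1 _,
    fun _ => qBesselCoeff_eigenvalue_eq_zero,
    (qBesselCoeff_eigenvalue_pos hq hq1 le_rfl).ne'⟩

/-- The `q`-Bessel equation `x² D_q² y + 2(x+1) D_q y - [n]_q([n-1]_q + 2) y = 0` admits a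
polynomial solution of degree `n` with the stated coefficients. -/
theorem stmt16 (q : ℝ) (hq : 0 < q) (hq1 : q ≠ 1) (n : ℕ) (hn : 1 ≤ n) :
    ∃ a : ℕ → ℝ,
      a 0 = 1 ∧
      a 1 = qnum q n * (qnum q (n - 1) + 2) / 2 ∧
      a 2 = ((qnum q n * (qnum q (n - 1) + 2) - 1) ^ 2 - 1) / (4 * qnum q 2) ∧
      (∀ ν, 3 ≤ ν → a ν = a 2 *
        ∏ j ∈ Finset.Icc 2 (ν - 1),
          ((qnum q n * (qnum q (n - 1) + 2) - qnum q j * (qnum q (j - 1) + 2)) /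
            (2 * qnum q (j + 1)))) ∧
      (X : PowerSeries ℂ) ^ 2 * qDeriv q (qDeriv q (PowerSeries.mk fun p => ((a p : ℝ) : ℂ)))
        + 2 * ((X : PowerSeries ℂ) + 1) * qDeriv q (PowerSeries.mk fun p => ((a p : ℝ) : ℂ))
        - C (R := ℂ) ((qnum q n * (qnum q (n - 1) + 2) : ℝ) : ℂ) *
            (PowerSeries.mk fun p => ((a p : ℝ) : ℂ)) = 0 ∧
      (∀ p, n < p → a p = 0) ∧ a n ≠ 0 :=
  stmt16_general q hq hq1 n
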